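/- arXiv:math/0211444 — 4 statements merged into one kernel-verified Lean document; each statement's English description precedes it below -/
import Mathlib

section
/- Let C be a column of type B or D which does not contain any pair (z, z̄) with z ≤ n unbarred and N(z) > z, and which is not admissible. Then the height of C exceeds n, C is of type B, and 0 is a letter of C. -/
/-- Rank of a letter of the alphabet `B_n = {1 ≺ ⋯ ≺ n ≺ 0 ≺ n̄ ≺ ⋯ ≺ 1̄}`,
where the letter `i` is encoded by the integer `i`, `0` by `0` and `ī` by `-i`. -/
def rankB (n : ℕ) (v : ℤ) : ℤ :=
  if 0 < v then v else if v = 0 then (n : ℤ) + 1 else 2 * (n : ℤ) + 2 + v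

/-- `C` is a column of type `B`: letters of `B_n`, strictly increasing from top to
bottom except that the letter `0` may repeat. -/
def IsColB (n : ℕ) (C : List ℤ) : Prop :=
  (∀ v ∈ C, v.natAbs ≤ n) ∧
  C.Chain' (fun a b => rankB n a < rankB n b ∨ (a = 0 ∧ b = 0))

/-- Rank of a letter of `D_n`; the letters `n` and `n̄` share the same rank
(they are incomparable). -/
def rankD (n : ℕ) (v : ℤ) : ℤ :=
  if 0 < v then v else 2 * (n : ℤ) + v

/-- `C` is a column of type `D`: letters of `D_n` with `x_{i+1} ⋠ x_i`. -/
def IsColD (n : ℕ) (C : List ℤ) : Prop :=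
  (∀ v ∈ C, 1 ≤ v.natAbs ∧ v.natAbs ≤ n) ∧
  C.Chain' (fun a b => rankD n a ≤ rankD n b ∧ a ≠ b)

/-- `N(z)`: the number of letters `x` of `C` with `x ⪯ z` or `x ⪰ z̄`,
for an unbarred letter `z`; these are exactly the nonzero letters of absolute
value at most `z`. -/
def Ncount (n : ℕ) (C : List ℤ) (z : ℤ) : ℕ :=
  (C.filter (fun v => decide (v ≠ 0 ∧ (v.natAbs : ℤ) ≤ z))).length

/-- Kashiwara–Nakashima admissibility: height at most `n` and `N(z) ≤ z` for
every pair `(z, z̄)` with `z ⪯ n` unbarred occurring in `C`. -/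
def Admissible (n : ℕ) (C : List ℤ) : Prop :=
  C.length ≤ n ∧
  ∀ z : ℤ, 1 ≤ z → z ≤ (n : ℤ) → z ∈ C → -z ∈ C → (Ncount n C z : ℤ) ≤ z

/-! Letters of a column of type `B` or `D` other than `0` can repeat in absolute value only as
a pair `(z, z̄)` (type `B`: strictly increasing; type `D`: two equal letters sandwich their
partner). Let `z` be the largest such `z` (or `0` if there is none). The letters of absolute
value at most `z` number `N(z) ≤ z`, and the remaining ones have pairwise distinct absolute
values in `(z, n]`, so there are at most `n - z` of them. Hence a column without `0` satisfying
`N(z) ≤ z` for all its pairs has height at most `n`, i.e. it is admissible. -/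

lemma List.Nodup.length_le_sub {l : List ℕ} {k m : ℕ} (hl : l.Nodup)
    (hmem : ∀ a ∈ l, k < a ∧ a ≤ m) : l.length ≤ m - k := by
  rw [← List.toFinset_card_of_nodup hl, ← Nat.card_Ioc]
  exact Finset.card_le_card fun a ha => Finset.mem_Ioc.2 (hmem a (List.mem_toFinset.1 ha))

lemma natAbs_mem_and_neg_mem {C : List ℤ} {x : ℤ} (hx : x ∈ C) (hx' : -x ∈ C) :
    (x.natAbs : ℤ) ∈ C ∧ -(x.natAbs : ℤ) ∈ C := by
  rw [Int.natCast_natAbs]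
  rcases abs_choice x with h | h <;> simp [h, hx, hx']

lemma Ncount_zero (n : ℕ) (C : List ℤ) : Ncount n C 0 = 0 := by
  simp only [Ncount, List.length_eq_zero_iff, List.filter_eq_nil_iff, decide_eq_true_eq]
  omega

lemma length_eq_Ncount_add (n : ℕ) {C : List ℤ} (h0 : (0 : ℤ) ∉ C) (z : ℕ) :
    C.length = Ncount n C z + (C.filter fun v => z < v.natAbs).length := by
  rw [C.length_eq_length_filter_add fun v => decide (v ≠ 0 ∧ (v.natAbs : ℤ) ≤ z), Ncount]
  congr 2
  apply List.filter_congr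
  intro v hv
  have hv0 : v ≠ 0 := fun h => h0 (h ▸ hv)
  simp only [ne_eq, hv0, not_false_eq_true, true_and, Nat.cast_le, ← decide_not, not_le]

theorem length_le_of_Ncount_le {n : ℕ} {C : List ℤ}
    (hmem : ∀ v ∈ C, v ≠ 0 ∧ v.natAbs ≤ n)
    (hrep : C.Pairwise fun x y => x = y → -x ∈ C)
    (hN : ∀ z : ℤ, 1 ≤ z → z ≤ n → z ∈ C → -z ∈ C → (Ncount n C z : ℤ) ≤ z) :
    C.length ≤ n := by
  have h0 : (0 : ℤ) ∉ C := fun h => (hmem 0 h).1 rfl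
  let P : ℕ → Prop := fun a => (a : ℤ) ∈ C ∧ -(a : ℤ) ∈ C
  set z := Nat.findGreatest P n with hz
  have hzn : z ≤ n := Nat.findGreatest_le n
  have hsmall : Ncount n C z ≤ z := by
    rcases Nat.eq_zero_or_pos z with hz0 | hzpos
    · rw [hz0, Nat.cast_zero, Ncount_zero]
    · obtain ⟨hzC, hzC'⟩ := Nat.findGreatest_of_ne_zero hz.symm hzpos.ne'
      exact_mod_cast hN z (by omega) (by exact_mod_cast hzn) hzC hzC'
  have hlarge : (C.filter fun v => z < v.natAbs).length ≤ n - z := by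
    rw [← List.length_map Int.natAbs]
    apply List.Nodup.length_le_sub
    · rw [List.Nodup, List.pairwise_map]
      refine (hrep.sublist List.filter_sublist).imp_of_mem fun {x y} hx hy hxy habs => ?_
      obtain ⟨hxC, hzx⟩ := List.mem_filter.1 hx
      have hneg : -x ∈ C := by
        rcases Int.natAbs_eq_natAbs_iff.1 habs with rfl | rfl
        · exact hxy rfl
        · simpa using (List.mem_filter.1 hy).1
      have := Nat.le_findGreatest (P := P) (hmem x hxC).2 (natAbs_mem_and_neg_mem hxC hneg)
      simp only [decide_eq_true_eq] at hzx
      omega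
    · simp only [List.mem_map, List.mem_filter, decide_eq_true_eq]
      rintro _ ⟨v, ⟨hv, hzv⟩, rfl⟩
      exact ⟨hzv, (hmem v hv).2⟩
  have := length_eq_Ncount_add n h0 z
  omega

lemma IsColB.nodup {n : ℕ} {C : List ℤ} (h : IsColB n C) (h0 : (0 : ℤ) ∉ C) : C.Nodup := by
  let R : ℤ → ℤ → Prop := fun a b => rankB n a < rankB n b ∨ (a = 0 ∧ b = 0)
  have : Trans R R R := ⟨fun {a b c} hab hbc => by
    rcases hab with hab | ⟨rfl, rfl⟩ <;> rcases hbc with hbc | ⟨hb, rfl⟩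
    · exact Or.inl (hab.trans hbc)
    · exact Or.inl (hb ▸ hab)
    · exact Or.inl hbc
    · exact Or.inr ⟨rfl, rfl⟩⟩
  refine (h.2.pairwise (R := R)).imp_of_mem fun ha _ hab => ?_
  rcases hab with hlt | ⟨rfl, -⟩
  · rintro rfl
    exact lt_irrefl _ hlt
  · exact absurd ha h0

lemma eq_neg_of_rankD_eq {n : ℕ} {u w : ℤ} (hu : 1 ≤ u.natAbs ∧ u.natAbs ≤ n)
    (hw : 1 ≤ w.natAbs ∧ w.natAbs ≤ n) (hr : rankD n u = rankD n w) (hne : u ≠ w) :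
    w = -u := by
  unfold rankD at hr
  split_ifs at hr <;> omega

lemma IsColD.tail {n : ℕ} {x : ℤ} {l : List ℤ} (h : IsColD n (x :: l)) : IsColD n l :=
  ⟨fun v hv => h.1 v (List.mem_cons_of_mem x hv), (List.isChain_cons.1 h.2).2⟩

lemma IsColD.neg_mem_of_repeat {n : ℕ} {C : List ℤ} (h : IsColD n C) :
    C.Pairwise fun x y => x = y → -x ∈ C := by
  induction C with
  | nil => exact List.Pairwise.nil
  | cons x l ih =>
    refine List.pairwise_cons.2
      ⟨?_, (ih h.tail).imp fun hxy e => List.mem_cons_of_mem x (hxy e)⟩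
    rintro _ hxl rfl
    obtain _ | ⟨w, l'⟩ := l
    · exact absurd hxl List.not_mem_nil
    obtain ⟨⟨hxw, hne⟩, -⟩ := List.isChain_cons_cons.1 h.2
    have hxl' : x ∈ l' := (List.mem_cons.1 hxl).resolve_left hne
    have hsorted : (w :: l').Pairwise fun a b => rankD n a ≤ rankD n b :=
      (h.tail.2.imp fun _ _ hab => hab.1).pairwise
    have hwx : rankD n w ≤ rankD n x := List.rel_of_pairwise_cons hsorted hxl'
    have hw := eq_neg_of_rankD_eq (h.1 x List.mem_cons_self)
      (h.1 w (by simp)) (le_antisymm hxw hwx) hne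
    simp [← hw]

/-- Let `C` be a column of type `B` or `D` which does not
contain any pair `(z, z̄)` with `z ⪯ n` unbarred and `N(z) > z`, and which is
not admissible.  Then the height of `C` exceeds `n`, `C` is of type `B`, and
`0` is a letter of `C`. -/
theorem stmt1 (n : ℕ) (C : List ℤ)
    (hcol : IsColB n C ∨ IsColD n C)
    (hnopair : ∀ z : ℤ, 1 ≤ z → z ≤ (n : ℤ) → z ∈ C → -z ∈ C →
      (Ncount n C z : ℤ) ≤ z)
    (hnadm : ¬ Admissible n C) :
    n < C.length ∧ IsColB n C ∧ (0 : ℤ) ∈ C := by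
  have hlen : n < C.length := lt_of_not_ge fun h => hnadm ⟨h, hnopair⟩
  refine ⟨hlen, ?_⟩
  rcases hcol with hB | hD
  · refine ⟨hB, by_contra fun h0 => hlen.not_ge ?_⟩
    exact length_le_of_Ncount_le (fun v hv => ⟨fun hv0 => h0 (hv0 ▸ hv), hB.1 v hv⟩)
      ((hB.nodup h0).imp fun hne heq => absurd heq hne) hnopair
  · refine absurd (length_le_of_Ncount_le (fun v hv => ?_) hD.neg_mem_of_repeat hnopair)
      hlen.not_ge
    exact ⟨Int.natAbs_pos.1 (hD.1 v hv).1, (hD.1 v hv).2⟩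
end

section
/- A column C of type B or D which can be split is admissible. That is, if there exists a set J_C = {t_1 ≻ ... ≻ t_s} of unbarred letters not occurring in C (neither t_i nor t̄_i occurs in C), chosen greedily as the greatest letters satisfying t_1 ≺ z_1 and t_i ≺ min(t_{i-1}, z_i) where I_C = {z_1 ⪰ ... ⪰ z_s} is the multiset of unbarred letters z ⪯ 0 such that the pair (z, z̄) occurs in C, then C satisfies the admissibility condition N(z) ≤ z for all such pairs and h(C) ≤ n. -/
/-- The multiset `I_C`: one letter `0` for each occurrence of `0` in `C` (listed
first), followed by the unbarred letters `z` with `(z, z̄)` occurring in `C`, in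
decreasing order. -/
def IC (n : ℕ) (C : List ℤ) : List ℤ :=
  List.replicate (C.count 0) 0 ++
    ((List.range n).reverse.filterMap fun k =>
      if ((k + 1 : ℤ) ∈ C ∧ (-((k : ℤ) + 1)) ∈ C) then some ((k : ℤ) + 1) else none)

/-- `GreedyJ n C I J bound` holds when `J` is the greedy choice of substitute
letters for `I`: each `t_i` is the greatest unbarred letter with
`t_i ≺ min (t_{i-1}, z_i)` such that neither `t_i` nor `t̄_i` occurs in `C`
(the letter `0` is treated as larger than every unbarred letter). -/
def GreedyJ (n : ℕ) (C : List ℤ) : List ℤ → List ℤ → ℤ → Prop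
  | [], [], _ => True
  | z :: I, t :: J, bound =>
      (1 ≤ t ∧ t < min bound (if z = 0 then (n : ℤ) + 1 else z) ∧
        t ∉ C ∧ -t ∉ C ∧
        (∀ t' : ℤ, t < t' → t' < min bound (if z = 0 then (n : ℤ) + 1 else z) →
          t' ∈ C ∨ -t' ∈ C)) ∧
      GreedyJ n C I J t
  | _, _, _ => False

/-- A column of type `B` can be split when the greedy choice of the `t_i`
succeeds. -/
def CanSplitB (n : ℕ) (C : List ℤ) : Prop :=
  ∃ J : List ℤ, GreedyJ n C (IC n C) J ((n : ℤ) + 1)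

/-- The type-`B` column `Ĉ` associated to a column of type `D`: each factor
`n̄ n` is replaced by `0 0`. -/
def hatD (n : ℕ) : List ℤ → List ℤ
  | [] => []
  | [a] => [a]
  | a :: b :: rest =>
      if a = -(n : ℤ) ∧ b = (n : ℤ) then 0 :: 0 :: hatD n rest
      else a :: hatD n (b :: rest)

/-- `(lC, rC)` is the split pair of the column `C`: in `rC` each `z̄_i` is
changed into `t̄_i` and in `lC` each `z_i` is changed into `t_i`, reordering
afterwards. -/
def SplitPair (n : ℕ) (C l r : List ℤ) : Prop :=
  ∃ J : List ℤ, GreedyJ n C (IC n C) J ((n : ℤ) + 1) ∧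
    l.Chain' (fun a b => rankB n a < rankB n b) ∧
    (l : Multiset ℤ) + (IC n C : Multiset ℤ) = (C : Multiset ℤ) + (J : Multiset ℤ) ∧
    r.Chain' (fun a b => rankB n a < rankB n b) ∧
    (r : Multiset ℤ) + (((IC n C).map fun z => -z : List ℤ) : Multiset ℤ)
      = (C : Multiset ℤ) + (((J.map fun z => -z : List ℤ)) : Multiset ℤ)

/-!
The greedy letters `t₁ > ⋯ > t_s` are distinct *free* letters (neither `t` nor `t̄` occurs
in `C`) with `t_i < z_i`, where a `0` of `I_C` counts as `n + 1`. Hence the pairs `(m, m̄)`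
of `C` with `m ≤ z` are at most as many as the free letters below `z`, and `|I_C|` is at
most the number of free letters `≤ n`. The letters of `[1, z]` are either free or occur in
`C` (as `m` or `m̄`), and `N(z)` is at most the number of occurring letters plus the number
of pairs; so `N(z) ≤ z`, and for `z = n`, adding the zeros, `h(C) ≤ n`.

For type `D`, `Ĉ` is a column of type `B` with the same height, and for `z < n` the same
pairs and the same `N(z)`; for `z = n` simply `N(n) ≤ h(C) ≤ n`.
-/

noncomputable def freeLetters (C : List ℤ) (a : ℤ) : Finset ℤ :=
  (Finset.Icc 1 a).filter fun u => u ∉ C ∧ -u ∉ C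

noncomputable def pairLetters (C : List ℤ) (a : ℤ) : Finset ℤ :=
  (Finset.Icc 1 a).filter fun u => u ∈ C ∧ -u ∈ C

/-- The bound that `z_i` imposes on `t_i` in `GreedyJ`: a `0` of `I_C` acts as `n + 1`. -/
def greedyCap (n : ℕ) (m : ℤ) : ℤ :=
  if m = 0 then (n : ℤ) + 1 else m

lemma freeLetters_mono (C : List ℤ) : Monotone (freeLetters C) := fun _ _ h =>
  Finset.filter_subset_filter _ (Finset.Icc_subset_Icc_right h)

lemma pairLetters_mono (C : List ℤ) : Monotone (pairLetters C) := fun _ _ h =>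
  Finset.filter_subset_filter _ (Finset.Icc_subset_Icc_right h)

lemma card_freeLetters_pred_lt {C : List ℤ} {t a : ℤ} (ht : t ∈ freeLetters C a) :
    (freeLetters C (t - 1)).card < (freeLetters C a).card := by
  have hta : t ≤ a := (Finset.mem_Icc.1 (Finset.mem_filter.1 ht).1).2
  refine Finset.card_lt_card <| (Finset.ssubset_iff_of_subset
    (freeLetters_mono C (by omega))).2 ⟨t, ht, ?_⟩
  simp [freeLetters]

theorem GreedyJ.countP_le {n : ℕ} {C : List ℤ} (z : ℤ) :
    ∀ {I J : List ℤ} {bound : ℤ}, GreedyJ n C I J bound →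
      I.countP (fun m => greedyCap n m ≤ z) ≤ (freeLetters C (min bound z - 1)).card
  | [], _, _, _ => by simp
  | _ :: _, [], _, h => h.elim
  | m :: I, t :: J, bound, ⟨⟨ht1, htm, htC, htC', _⟩, hIJ⟩ => by
      have ih := GreedyJ.countP_le z hIJ
      obtain ⟨htb, htm : t < greedyCap n m⟩ := lt_min_iff.1 htm
      by_cases hmz : greedyCap n m ≤ z
      · have hfree : t ∈ freeLetters C (min bound z - 1) := by
          simp only [freeLetters, Finset.mem_filter, Finset.mem_Icc]
          exact ⟨⟨ht1, by omega⟩, htC, htC'⟩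
        have := card_freeLetters_pred_lt hfree
        rw [min_eq_left (by omega : t ≤ z)] at ih
        simp only [List.countP_cons, hmz, decide_true, if_true]
        omega
      · simp only [List.countP_cons, hmz, decide_false]
        exact ih.trans (Finset.card_le_card (freeLetters_mono C (by omega)))

lemma mem_IC_iff_of_ne_zero {n : ℕ} {C : List ℤ} {m : ℤ} (hm : m ≠ 0) :
    m ∈ IC n C ↔ (1 ≤ m ∧ m ≤ n) ∧ m ∈ C ∧ -m ∈ C := by
  simp only [IC, List.mem_append, List.mem_replicate, List.mem_filterMap, bind_pure_comp,
    List.map_eq_map, List.mem_map, List.mem_reverse, List.mem_range]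
  constructor
  · rintro (⟨-, rfl⟩ | ⟨_, ⟨k, hk, rfl⟩, hkm⟩)
    · exact absurd rfl hm
    · split_ifs at hkm with hkC
      cases hkm
      exact ⟨⟨by omega, by omega⟩, hkC⟩
  · rintro ⟨⟨h1, h2⟩, hmC⟩
    refine Or.inr ⟨m - 1, ⟨(m - 1).toNat, by omega, by omega⟩, ?_⟩
    simp [hmC]

lemma mem_IC_of_mem_pairLetters {n : ℕ} {C : List ℤ} {m : ℤ} (hm : m ∈ pairLetters C n) :
    m ∈ IC n C := by
  simp only [pairLetters, Finset.mem_filter, Finset.mem_Icc] at hm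
  exact (mem_IC_iff_of_ne_zero (by omega)).2 hm

lemma greedyCap_le_of_mem_IC {n : ℕ} {C : List ℤ} {m : ℤ} (hm : m ∈ IC n C) :
    greedyCap n m ≤ n + 1 := by
  unfold greedyCap
  split_ifs with h0
  · rfl
  · have := (mem_IC_iff_of_ne_zero h0).1 hm
    omega

lemma card_le_countP_IC {n : ℕ} {C : List ℤ} {s : Finset ℤ} (hs : s ⊆ pairLetters C n)
    (p : ℤ → Bool) (hp : ∀ m ∈ s, p m) : s.card ≤ (IC n C).countP p := by
  rw [List.countP_eq_length_filter]
  refine (Finset.card_le_card fun m hm => ?_).trans (List.toFinset_card_le _)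
  exact List.mem_toFinset.2 (List.mem_filter.2 ⟨mem_IC_of_mem_pairLetters (hs hm), hp m hm⟩)

lemma count_zero_add_card_pairLetters_le_length_IC (n : ℕ) (C : List ℤ) :
    C.count 0 + (pairLetters C n).card ≤ (IC n C).length := by
  have hzeros : C.count 0 ≤ (IC n C).countP (fun m => m = 0) := by
    rw [IC, List.countP_append, List.countP_replicate]
    simp
  have hpairs : (pairLetters C n).card ≤ (IC n C).countP (fun m => ¬m = 0) :=
    card_le_countP_IC subset_rfl _ fun m hm => by
      simp only [pairLetters, Finset.mem_filter, Finset.mem_Icc] at hm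
      simpa using (by omega : m ≠ 0)
  have hlen := List.length_eq_countP_add_countP (fun m => decide (m = 0)) (l := IC n C)
  simp only [decide_eq_true_eq] at hlen
  omega

lemma CanSplitB.length_IC_le {n : ℕ} {C : List ℤ} (h : CanSplitB n C) :
    (IC n C).length ≤ (freeLetters C n).card := by
  obtain ⟨J, hJ⟩ := h
  have := hJ.countP_le (n + 1)
  rwa [min_self, add_sub_cancel_right, List.countP_eq_length.2 fun m hm => by
    simpa using greedyCap_le_of_mem_IC hm] at this

lemma CanSplitB.card_pairLetters_le {n : ℕ} {C : List ℤ} (h : CanSplitB n C) {z : ℤ}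
    (hzn : z ≤ n) : (pairLetters C z).card ≤ (freeLetters C (z - 1)).card := by
  obtain ⟨J, hJ⟩ := h
  have := hJ.countP_le z
  rw [min_eq_right (by omega)] at this
  refine le_trans (card_le_countP_IC (pairLetters_mono C hzn) _ fun m hm => ?_) this
  simp only [pairLetters, Finset.mem_filter, Finset.mem_Icc] at hm
  simpa [greedyCap, show m ≠ 0 by omega] using hm.1.2

lemma IsColB.pairwise {n : ℕ} {C : List ℤ} (h : IsColB n C) :
    C.Pairwise (fun a b => rankB n a < rankB n b ∨ (a = 0 ∧ b = 0)) := by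
  have : IsTrans ℤ (fun a b => rankB n a < rankB n b ∨ (a = 0 ∧ b = 0)) :=
    ⟨fun a b c hab hbc => by
      rcases hab with hab | ⟨rfl, rfl⟩ <;> rcases hbc with hbc | ⟨hb, rfl⟩
      · exact Or.inl (hab.trans hbc)
      · exact Or.inl (hb ▸ hab)
      · exact Or.inl hbc
      · exact Or.inr ⟨rfl, rfl⟩⟩
  exact List.isChain_iff_pairwise.mp h.2

lemma IsColB.nodup_filter {n : ℕ} {C : List ℤ} (h : IsColB n C) {p : ℤ → Bool}
    (hp : ∀ v, p v → v ≠ 0) : (C.filter p).Nodup := by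
  refine (h.pairwise.sublist List.filter_sublist).imp_of_mem fun ha _ hab => ?_
  rcases hab with hab | ⟨ha0, -⟩
  · exact fun hab' => (hab' ▸ hab).false
  · exact absurd ha0 (hp _ (List.of_mem_filter ha))

lemma IsColB.ncount_add_card_freeLetters_le {n : ℕ} {C : List ℤ} (h : IsColB n C) (z : ℤ) :
    Ncount n C z + (freeLetters C z).card ≤ z.toNat + (pairLetters C z).card := by
  set A := (Finset.Icc 1 z).filter fun m => m ∈ C
  set B := (Finset.Icc 1 z).filter fun m => -m ∈ C
  have hN : Ncount n C z ≤ A.card + B.card := by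
    rw [Ncount, ← List.toFinset_card_of_nodup (h.nodup_filter fun v hv => by
      simp only [decide_eq_true_eq] at hv; exact hv.1)]
    refine (Finset.card_le_card (t := A ∪ B.image Neg.neg) fun v hv => ?_).trans
      ((Finset.card_union_le _ _).trans (add_le_add le_rfl Finset.card_image_le))
    simp only [List.mem_toFinset, List.mem_filter, decide_eq_true_eq] at hv
    obtain ⟨hvC, hv0, hvz⟩ := hv
    simp only [A, B, Finset.mem_union, Finset.mem_image, Finset.mem_filter, Finset.mem_Icc]
    rcases lt_or_gt_of_ne hv0 with hneg | hpos
    · exact Or.inr ⟨-v, ⟨⟨by omega, by omega⟩, by simpa using hvC⟩, neg_neg v⟩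
    · exact Or.inl ⟨⟨by omega, by omega⟩, hvC⟩
  have hAB : A.card + B.card = (A ∪ B).card + (pairLetters C z).card := by
    rw [← Finset.card_union_add_card_inter A B, pairLetters, Finset.filter_and]
  have hfree : (A ∪ B).card + (freeLetters C z).card = z.toNat := by
    have hcompl : freeLetters C z = (Finset.Icc 1 z).filter fun m => ¬(m ∈ C ∨ -m ∈ C) := by
      simp only [freeLetters, not_or]
    rw [hcompl, ← Finset.filter_or, Finset.card_filter_add_card_filter_not, Int.card_Icc]
    omega
  omega

lemma IsColB.length_le_count_zero_add_ncount {n : ℕ} {C : List ℤ} (h : IsColB n C) :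
    C.length ≤ C.count 0 + Ncount n C n := by
  have hzeros : C.countP (fun v => ¬(v ≠ 0 ∧ (v.natAbs : ℤ) ≤ n)) = C.count 0 := by
    rw [List.count_eq_countP]
    refine List.countP_congr fun v hv => ?_
    have := h.1 v hv
    simp only [decide_eq_true_eq, beq_iff_eq]
    omega
  rw [Ncount, ← List.countP_eq_length_filter, List.length_eq_countP_add_countP (fun v =>
    decide (v ≠ 0 ∧ (v.natAbs : ℤ) ≤ n))]
  simp only [decide_eq_true_eq, hzeros]
  omega

theorem IsColB.admissible_of_canSplitB {n : ℕ} {C : List ℤ} (h : IsColB n C)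
    (hs : CanSplitB n C) : Admissible n C := by
  refine ⟨?_, fun z hz1 hzn _ _ => ?_⟩
  · have := h.length_le_count_zero_add_ncount
    have := h.ncount_add_card_freeLetters_le n
    have := count_zero_add_card_pairLetters_le_length_IC n C
    have := hs.length_IC_le
    omega
  · have := h.ncount_add_card_freeLetters_le z
    have := hs.card_pairLetters_le hzn
    have := Finset.card_le_card (freeLetters_mono C (by omega : z - 1 ≤ z))
    omega

lemma length_hatD (n : ℕ) (C : List ℤ) : (hatD n C).length = C.length := by
  induction C using hatD.induct n with
  | case1 | case2 => simp [hatD]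
  | case3 a b rest h ih | case4 a b rest h ih => simp [hatD, h, ih]

lemma filter_hatD (n : ℕ) {p : ℤ → Bool} (h0 : p 0 = false) (hn : p n = false)
    (hn' : p (-n) = false) (C : List ℤ) : (hatD n C).filter p = C.filter p := by
  induction C using hatD.induct n with
  | case1 | case2 => simp [hatD]
  | case3 a b rest h ih =>
    obtain ⟨rfl, rfl⟩ := h
    simp [hatD, ih, h0, hn, hn']
  | case4 a b rest h ih => simp [hatD, h, List.filter_cons, ih]

lemma eq_zero_or_mem_of_mem_hatD {n : ℕ} {C : List ℤ} {v : ℤ} (hv : v ∈ hatD n C) :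
    v = 0 ∨ v ∈ C := by
  induction C using hatD.induct n with
  | case1 => simp [hatD] at hv
  | case2 a => simp_all [hatD]
  | case3 a b rest h ih =>
    simp only [hatD, h, and_self, if_true, List.mem_cons] at hv
    rcases hv with rfl | rfl | hv
    · exact Or.inl rfl
    · exact Or.inl rfl
    · exact (ih hv).imp_right fun hv => by simp [hv]
  | case4 a b rest h ih =>
    simp only [hatD, h, if_false, List.mem_cons] at hv
    rcases hv with rfl | hv
    · simp
    · exact (ih hv).imp_right (List.mem_cons_of_mem _)

lemma mem_hatD_iff {n : ℕ} {C : List ℤ} {v : ℤ} (h0 : v ≠ 0) (hn : v ≠ n) (hn' : v ≠ -n) :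
    v ∈ hatD n C ↔ v ∈ C := by
  have := filter_hatD n (p := (· == v)) (by simpa using h0.symm) (by simpa using hn.symm)
    (by simpa using hn'.symm) C
  rw [← List.count_pos_iff, ← List.count_pos_iff, List.count_eq_countP, List.count_eq_countP,
    List.countP_eq_length_filter, List.countP_eq_length_filter, this]

lemma ncount_hatD {n : ℕ} {z : ℤ} (hz : z < n) (C : List ℤ) :
    Ncount n (hatD n C) z = Ncount n C z := by
  rw [Ncount, Ncount, filter_hatD] <;> simp <;> omega

lemma head?_hatD (n : ℕ) (C : List ℤ) :
    (hatD n C).head? = C.head? ∨ ((hatD n C).head? = some 0 ∧ C.head? = some (-(n : ℤ))) := by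
  match C with
  | [] | [_] => simp [hatD]
  | a :: b :: rest =>
    unfold hatD
    split_ifs with h
    · simp [h.1]
    · simp

section Letters

variable {n : ℕ} {a b : ℤ}

lemma rankB_lt_rankB_of_rankD_le (ha : 1 ≤ a.natAbs ∧ a.natAbs ≤ n)
    (hb : 1 ≤ b.natAbs ∧ b.natAbs ≤ n) (hab : rankD n a ≤ rankD n b) (hne : a ≠ b)
    (hnn : ¬(a = -n ∧ b = n)) : rankB n a < rankB n b := by
  unfold rankB rankD at *
  split_ifs at * <;> omega

lemma rankB_lt_rankB_zero (ha : 1 ≤ a.natAbs ∧ a.natAbs ≤ n) (hab : rankD n a ≤ rankD n (-n))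
    (hne : a ≠ -n) : rankB n a < rankB n 0 := by
  unfold rankB rankD at *
  split_ifs at * <;> omega

lemma rankB_zero_lt_rankB (hb : 1 ≤ b.natAbs ∧ b.natAbs ≤ n) (hab : rankD n n ≤ rankD n b)
    (hne : (n : ℤ) ≠ b) : rankB n 0 < rankB n b := by
  unfold rankB rankD at *
  split_ifs at * <;> omega

end Letters

lemma IsColD.of_cons {n : ℕ} {a : ℤ} {C : List ℤ} (h : IsColD n (a :: C)) : IsColD n C :=
  ⟨fun v hv => h.1 v (List.mem_cons_of_mem a hv), h.2.tail⟩

lemma IsColD.isColB_hatD {n : ℕ} {C : List ℤ} (h : IsColD n C) : IsColB n (hatD n C) := by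
  refine ⟨fun v hv => ?_, ?_⟩
  · rcases eq_zero_or_mem_of_mem_hatD hv with rfl | hv
    · simp
    · exact (h.1 v hv).2
  change List.IsChain _ (hatD n C)
  induction C using hatD.induct n with
  | case1 => exact List.isChain_nil
  | case2 a => exact List.isChain_singleton a
  | case3 a b rest hab ih =>
    obtain ⟨rfl, rfl⟩ := hab
    rw [hatD, if_pos ⟨rfl, rfl⟩, List.isChain_cons_cons, List.isChain_cons]
    refine ⟨Or.inr ⟨rfl, rfl⟩, fun y hy => ?_, ih h.of_cons.of_cons⟩
    rcases head?_hatD n rest with hhead | ⟨hhead, -⟩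
    · rw [hhead] at hy
      have hny := (List.isChain_cons.1 (List.isChain_cons.1 h.2).2).1 y hy
      exact Or.inl (rankB_zero_lt_rankB (h.1 y (by simp [List.mem_of_mem_head? hy])) hny.1 hny.2)
    · rw [hhead, Option.mem_some_iff] at hy
      exact Or.inr ⟨rfl, hy.symm⟩
  | case4 a b rest hab ih =>
    rw [hatD, if_neg hab, List.isChain_cons]
    refine ⟨fun y hy => ?_, ih h.of_cons⟩
    have ha := h.1 a List.mem_cons_self
    have hrel := (List.isChain_cons.1 h.2).1 b rfl
    rcases head?_hatD n (b :: rest) with hhead | ⟨hhead, hb⟩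
    · rw [hhead, List.head?_cons, Option.mem_some_iff] at hy
      subst hy
      exact Or.inl (rankB_lt_rankB_of_rankD_le ha (h.of_cons.1 b List.mem_cons_self) hrel.1
        hrel.2 hab)
    · rw [hhead, Option.mem_some_iff] at hy
      rw [List.head?_cons, Option.some_inj] at hb
      subst hy hb
      exact Or.inl (rankB_lt_rankB_zero ha hrel.1 hrel.2)

theorem IsColD.admissible_of_canSplitB_hatD {n : ℕ} {C : List ℤ} (h : IsColD n C)
    (hs : CanSplitB n (hatD n C)) : Admissible n C := by
  obtain ⟨hlen, hadm⟩ := h.isColB_hatD.admissible_of_canSplitB hs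
  rw [length_hatD] at hlen
  refine ⟨hlen, fun z hz1 hzn hzC hzC' => ?_⟩
  rcases hzn.lt_or_eq with hzn | rfl
  · rw [← ncount_hatD hzn]
    exact hadm z hz1 hzn.le ((mem_hatD_iff (by omega) (by omega) (by omega)).2 hzC)
      ((mem_hatD_iff (by omega) (by omega) (by omega)).2 hzC')
  · exact (Nat.cast_le.2 (List.length_filter_le _ C)).trans (by exact_mod_cast hlen)

/-- A column `C` of type `B` or `D` which can be split is
admissible (for type `D`, `C` can be split when the associated type-`B` column
`Ĉ` can be split). -/
theorem stmt2 (n : ℕ) (C : List ℤ) :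
    (IsColB n C → CanSplitB n C → Admissible n C) ∧
    (IsColD n C → CanSplitB n (hatD n C) → Admissible n C) :=
  ⟨IsColB.admissible_of_canSplitB, IsColD.admissible_of_canSplitB_hatD⟩
end

section
/- If a column C of type B can be split, then the columns rC and lC (obtained by replacing in C each barred letter z̄_i of a pair by t̄_i, respectively each unbarred letter z_i of a pair by t_i, and reordering) contain no pair (z, z̄): i.e., no letter 0 and no unbarred letter z together with its barred partner z̄. -/
private lemma greedy_mem (n : ℕ) (C : List ℤ) :
    ∀ (I J : List ℤ) (b : ℤ), GreedyJ n C I J b → ∀ t ∈ J, 1 ≤ t ∧ t ∉ C ∧ -t ∉ C := by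
  intro I
  induction I with
  | nil =>
    intro J b h t ht
    cases J with
    | nil => simp at ht
    | cons a J => exact h.elim
  | cons z I ih =>
    intro J b h t ht
    cases J with
    | nil => exact h.elim
    | cons a J =>
      obtain ⟨⟨h1, _, h3, h4, _⟩, hrest⟩ := h
      rcases List.mem_cons.mp ht with rfl | ht
      · exact ⟨h1, h3, h4⟩
      · exact ih J a hrest t ht

private lemma IC_filter_mem (n : ℕ) (C : List ℤ) (v : ℤ) :
    (v ∈ ((List.range n).reverse.filterMap fun k =>
      if ((k + 1 : ℤ) ∈ C ∧ (-((k : ℤ) + 1)) ∈ C) then some ((k : ℤ) + 1) else none)) ↔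
    (1 ≤ v ∧ v ≤ (n:ℤ) ∧ v ∈ C ∧ -v ∈ C) := by
  simp only [List.mem_filterMap, List.bind_eq_flatMap, List.mem_flatMap, List.mem_reverse,
    List.mem_range, List.mem_pure]
  constructor
  · rintro ⟨k, ⟨a, ha, rfl⟩, hk⟩
    by_cases hc : ((a:ℤ) + 1 ∈ C ∧ -((a:ℤ) + 1) ∈ C)
    · rw [if_pos hc] at hk
      obtain rfl := Option.some_injective _ hk
      refine ⟨by omega, by omega, hc.1, hc.2⟩
    · rw [if_neg hc] at hk; exact absurd hk (by simp)
  · rintro ⟨h1, h2, h3, h4⟩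
    refine ⟨v - 1, ⟨(v-1).toNat, by omega, by omega⟩, ?_⟩
    rw [show v - 1 + 1 = v by ring, if_pos ⟨h3, h4⟩]

private lemma IC_mem (n : ℕ) (C : List ℤ) {v : ℤ} (hv : v ∈ IC n C) :
    v = 0 ∨ (1 ≤ v ∧ v ∈ C ∧ -v ∈ C) := by
  unfold IC at hv
  rcases List.mem_append.mp hv with h | h
  · exact Or.inl (List.eq_of_mem_replicate h)
  · obtain ⟨h1, _, h3, h4⟩ := (IC_filter_mem n C v).mp h
    exact Or.inr ⟨h1, h3, h4⟩

private lemma IC_count_zero (n : ℕ) (C : List ℤ) : (IC n C).count 0 = C.count 0 := by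
  have h0 : ((List.range n).reverse.filterMap fun k =>
      if ((k + 1 : ℤ) ∈ C ∧ (-((k : ℤ) + 1)) ∈ C) then some ((k : ℤ) + 1) else none).count 0
      = 0 := by
    rw [List.count_eq_zero]
    intro h
    have := (IC_filter_mem n C 0).mp h
    omega
  unfold IC
  rw [List.count_append, List.count_replicate, if_pos (by simp), h0]
  omega

private lemma IC_mem_of_pair (n : ℕ) (C : List ℤ) (hcol : IsColB n C) {z : ℤ}
    (h1 : 1 ≤ z) (hz : z ∈ C) (hz' : -z ∈ C) : z ∈ IC n C := by
  have hle : z ≤ (n : ℤ) := by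
    have := hcol.1 z hz
    omega
  unfold IC
  exact List.mem_append.mpr (Or.inr ((IC_filter_mem n C z).mpr ⟨h1, hle, hz, hz'⟩))

private lemma count_le_one_of_pairwise {R : ℤ → ℤ → Prop} :
    ∀ {l : List ℤ}, l.Pairwise R → ∀ {v : ℤ}, ¬ R v v → l.count v ≤ 1 := by
  intro l h
  induction h with
  | nil => simp
  | @cons a l ha _ ih =>
    intro v hv
    rw [List.count_cons]
    by_cases hav : a = v
    · subst hav
      have : l.count a = 0 := by
        rw [List.count_eq_zero]
        intro hmem
        exact hv (ha a hmem)
      simp [this]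
    · have := ih hv
      simp [hav]; omega

private lemma col_count_le_one (n : ℕ) (C : List ℤ) (hcol : IsColB n C) {v : ℤ}
    (hv : v ≠ 0) : C.count v ≤ 1 := by
  have htrans : Transitive (fun a b : ℤ => rankB n a < rankB n b ∨ (a = 0 ∧ b = 0)) := by
    intro a b c hab hbc
    rcases hab with h1 | ⟨rfl, rfl⟩ <;> rcases hbc with h2 | h2
    · exact Or.inl (h1.trans h2)
    · obtain ⟨rfl, rfl⟩ := h2; exact Or.inl h1
    · exact Or.inl h2
    · exact Or.inr ⟨rfl, h2.2⟩
  haveI : IsTrans ℤ (fun a b : ℤ => rankB n a < rankB n b ∨ (a = 0 ∧ b = 0)) := ⟨htrans⟩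
  have hp := List.isChain_iff_pairwise.mp hcol.2
  exact count_le_one_of_pairwise hp (by simp [hv])

/-- If a column `C` of type `B` can be split, then the columns
`rC` and `lC` contain no letter `0` and no pair `(z, z̄)`. -/
theorem stmt3 (n : ℕ) (C l r : List ℤ) (hcol : IsColB n C)
    (hsplit : SplitPair n C l r) :
    ((0 : ℤ) ∉ l ∧ ∀ z : ℤ, 1 ≤ z → ¬(z ∈ l ∧ -z ∈ l)) ∧
    ((0 : ℤ) ∉ r ∧ ∀ z : ℤ, 1 ≤ z → ¬(z ∈ r ∧ -z ∈ r)) := by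
  obtain ⟨J, hJ, _, hleq, _, hreq⟩ := hsplit
  have hJmem : ∀ t ∈ J, 1 ≤ t ∧ t ∉ C ∧ -t ∉ C :=
    greedy_mem n C (IC n C) J ((n : ℤ) + 1) hJ
  have hnegmap : ∀ (L : List ℤ) (v : ℤ), (L.map fun z => -z).count v = L.count (-v) := by
    intro L v
    have := List.count_map_of_injective L (fun z : ℤ => -z)
      (fun a b hab => by simpa using hab) (-v)
    simpa using this
  have hcntl : ∀ v : ℤ, l.count v + (IC n C).count v = C.count v + J.count v := by
    intro v
    have := congrArg (Multiset.count v) hleq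
    simpa [Multiset.coe_count] using this
  have hcntr : ∀ v : ℤ, r.count v + (IC n C).count (-v) = C.count v + J.count (-v) := by
    intro v
    have := congrArg (Multiset.count v) hreq
    simpa [Multiset.coe_count, hnegmap] using this
  have hJ0 : J.count 0 = 0 := by
    rw [List.count_eq_zero]
    intro h
    have := (hJmem 0 h).1; omega
  have hJneg : ∀ z : ℤ, 1 ≤ z → J.count (-z) = 0 := by
    intro z hz
    rw [List.count_eq_zero]
    intro h
    have := (hJmem (-z) h).1; omega
  have hICneg : ∀ z : ℤ, 1 ≤ z → (IC n C).count (-z) = 0 := by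
    intro z hz
    rw [List.count_eq_zero]
    intro h
    rcases IC_mem n C h with h0 | ⟨h1, _, _⟩ <;> omega
  constructor
  · constructor
    · -- 0 ∉ l
      have h := hcntl 0
      rw [IC_count_zero, hJ0] at h
      intro hmem
      have := List.count_pos_iff.mpr hmem
      omega
    · rintro z hz ⟨hzl, hzl'⟩
      have hnegC : -z ∈ C := by
        have h := hcntl (-z)
        rw [hICneg z hz, hJneg z hz] at h
        have := List.count_pos_iff.mpr hzl'
        rw [← List.count_pos_iff]
        omega
      by_cases hzC : z ∈ C
      · have hIC1 : 1 ≤ (IC n C).count z :=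
          List.count_pos_iff.mpr (IC_mem_of_pair n C hcol hz hzC hnegC)
        have hJz : J.count z = 0 := by
          rw [List.count_eq_zero]
          intro h
          exact (hJmem z h).2.1 hzC
        have hC1 : C.count z ≤ 1 := col_count_le_one n C hcol (by omega)
        have h := hcntl z
        have := List.count_pos_iff.mpr hzl
        omega
      · have hCz : C.count z = 0 := List.count_eq_zero.mpr hzC
        have h := hcntl z
        have := List.count_pos_iff.mpr hzl
        have hJz : z ∈ J := List.count_pos_iff.mp (by omega)
        exact (hJmem z hJz).2.2 (by simpa using hnegC)
  · constructor
    · -- 0 ∉ r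
      have h := hcntr 0
      rw [neg_zero, IC_count_zero, hJ0] at h
      intro hmem
      have := List.count_pos_iff.mpr hmem
      omega
    · rintro z hz ⟨hzr, hzr'⟩
      have hzC : z ∈ C := by
        have h := hcntr z
        rw [hICneg z hz, hJneg z hz] at h
        have := List.count_pos_iff.mpr hzr
        rw [← List.count_pos_iff]
        omega
      have hJz : J.count z = 0 := by
        rw [List.count_eq_zero]
        intro h
        exact (hJmem z h).2.1 hzC
      have h := hcntr (-z)
      rw [neg_neg, hJz] at h
      have hr1 := List.count_pos_iff.mpr hzr'
      by_cases hnegC : -z ∈ C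
      · have hIC1 : 1 ≤ (IC n C).count z :=
          List.count_pos_iff.mpr (IC_mem_of_pair n C hcol hz hzC hnegC)
        have hC1 : C.count (-z) ≤ 1 := col_count_le_one n C hcol (by omega)
        omega
      · have : C.count (-z) = 0 := List.count_eq_zero.mpr hnegC
        omega
end

section
/- Let w_1, w_2 be words over B_n (or D_n) with factorizations w_1 = u_1 v_1, w_2 = u_2 v_2 such that l(u_1) = l(u_2) and l(v_1) = l(v_2). If w_1 and w_2 lie in the same connected component of the crystal graph G_n, then u_1 and u_2 lie in the same connected component, and v_1 and v_2 lie in the same connected component. -/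
/-- Crystal operator `ẽ_i` on the vector crystal of `U_q(so_{2n+1})`:
`1 →¹ 2 → ⋯ → n →ⁿ 0 →ⁿ n̄ → ⋯ →¹ 1̄` (indices `1 ≤ i ≤ n`). -/
def vE (n i : ℕ) (x : ℤ) : Option ℤ :=
  if i < n then
    if x = (i : ℤ) + 1 then some (i : ℤ)
    else if x = -(i : ℤ) then some (-((i : ℤ) + 1)) else none
  else
    if x = 0 then some (n : ℤ) else if x = -(n : ℤ) then some 0 else none

/-- Crystal operator `f̃_i` on the vector crystal of type `B`. -/
def vF (n i : ℕ) (x : ℤ) : Option ℤ :=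
  if i < n then
    if x = (i : ℤ) then some ((i : ℤ) + 1)
    else if x = -((i : ℤ) + 1) then some (-(i : ℤ)) else none
  else
    if x = (n : ℤ) then some 0 else if x = 0 then some (-(n : ℤ)) else none

/-- `ε_i` on the vector crystal of type `B`. -/
def vEps (n i : ℕ) (x : ℤ) : ℕ :=
  if i < n then (if x = (i : ℤ) + 1 ∨ x = -(i : ℤ) then 1 else 0)
  else (if x = 0 then 1 else if x = -(n : ℤ) then 2 else 0)

/-- `φ_i` on the vector crystal of type `B`. -/
def vPhi (n i : ℕ) (x : ℤ) : ℕ :=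
  if i < n then (if x = (i : ℤ) ∨ x = -((i : ℤ) + 1) then 1 else 0)
  else (if x = (n : ℤ) then 2 else if x = 0 then 1 else 0)

/-- `ε_i` of a word `x₁ ⋯ x_l`, viewed as `x₁ ⊗ ⋯ ⊗ x_l`, via the tensor rule. -/
def wEps (n i : ℕ) : List ℤ → ℕ
  | [] => 0
  | x :: w => if vPhi n i x < wEps n i w then wEps n i w + vEps n i x - vPhi n i x
              else vEps n i x

/-- `φ_i` of a word via the tensor rule. -/
def wPhi (n i : ℕ) : List ℤ → ℕ
  | [] => 0
  | x :: w => if wEps n i w < vPhi n i x then wPhi n i w + vPhi n i x - wEps n i w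
              else wPhi n i w

/-- `f̃_i` on words (the crystal `G_n^B` of `⊕_l (V_n^B)^{⊗l}`). -/
def wF (n i : ℕ) : List ℤ → Option (List ℤ)
  | [] => none
  | x :: w => if wEps n i w < vPhi n i x then (vF n i x).map (· :: w)
              else (wF n i w).map (x :: ·)

/-- `ẽ_i` on words. -/
def wE (n i : ℕ) : List ℤ → Option (List ℤ)
  | [] => none
  | x :: w => if vPhi n i x < wEps n i w then (wE n i w).map (x :: ·)
              else (vE n i x).map (· :: w)

/-- A word is a highest weight vertex when it is killed by all `ẽ_i`. -/
def HighestWt (n : ℕ) (w : List ℤ) : Prop :=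
  ∀ i : ℕ, 1 ≤ i → i ≤ n → wE n i w = none

/-- Apply a sequence of lowering operators `f̃_{i₁}, …, f̃_{i_r}` to a word. -/
def applyF (n : ℕ) : List ℕ → List ℤ → Option (List ℤ)
  | [], w => some w
  | i :: F, w => (wF n i w).bind (applyF n F)

/-- Two words occur at the same place in two isomorphic connected components of
the crystal of words: they are obtained from highest weight vertices by the
same sequence of lowering operators. -/
def SamePlace (n : ℕ) (w₁ w₂ : List ℤ) : Prop :=
  ∃ h₁ h₂ : List ℤ, ∃ F : List ℕ, HighestWt n h₁ ∧ HighestWt n h₂ ∧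
    applyF n F h₁ = some w₁ ∧ applyF n F h₂ = some w₂

/-- Two words lie in the same connected component of the crystal of words. -/
def Conn (n : ℕ) : List ℤ → List ℤ → Prop :=
  Relation.EqvGen (fun a b => ∃ i : ℕ, 1 ≤ i ∧ i ≤ n ∧ wF n i a = some b)

/-- The reading of a tabloid `T = C₁ ⋯ C_r` is `w(C_r) ⋯ w(C₁)`. -/
def readT (T : List (List ℤ)) : List ℤ := T.reverse.flatten

/-- A tabloid of type `B`: a filling of a Young diagram whose columns (given
from left to right, each read from top to bottom) are columns of type `B`. -/
def IsTabloidB (n : ℕ) (T : List (List ℤ)) : Prop :=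
  (∀ C ∈ T, IsColB n C ∧ C ≠ []) ∧
  T.Chain' (fun a b => b.length ≤ a.length)

/-- The reading of the canonical (highest weight) tableau whose columns have
the given heights: the column of height `h` is `1 2 ⋯ h`. -/
def canonWord (hs : List ℕ) : List ℤ :=
  (hs.map fun h => (List.range h).map fun j => (j : ℤ) + 1).reverse.flatten

/-- An orthogonal tableau of type `B`: a tabloid whose reading lies in the
connected component `B(v_λ)` of the canonical highest weight vertex of its
shape. -/
def IsOrthTabB (n : ℕ) (T : List (List ℤ)) : Prop :=
  IsTabloidB n T ∧ Conn n (readT T) (canonWord (T.map List.length))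

/-- Crystal operator `f̃_i` on the vector crystal of `U_q(so_{2n})` (type `D`,
letters of `D_n` encoded as nonzero integers). -/
def vFD (n i : ℕ) (x : ℤ) : Option ℤ :=
  if i < n then
    if x = (i : ℤ) then some ((i : ℤ) + 1)
    else if x = -((i : ℤ) + 1) then some (-(i : ℤ)) else none
  else
    if x = (n : ℤ) - 1 then some (-(n : ℤ))
    else if x = (n : ℤ) then some (-((n : ℤ) - 1)) else none

/-- `ε_i` on the vector crystal of type `D`. -/
def vEpsD (n i : ℕ) (x : ℤ) : ℕ :=
  if i < n then (if x = (i : ℤ) + 1 ∨ x = -(i : ℤ) then 1 else 0)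
  else (if x = -(n : ℤ) ∨ x = -((n : ℤ) - 1) then 1 else 0)

/-- `φ_i` on the vector crystal of type `D`. -/
def vPhiD (n i : ℕ) (x : ℤ) : ℕ :=
  if i < n then (if x = (i : ℤ) ∨ x = -((i : ℤ) + 1) then 1 else 0)
  else (if x = (n : ℤ) - 1 ∨ x = (n : ℤ) then 1 else 0)

/-- `ε_i` of a word of type `D`, via the tensor rule. -/
def wEpsD (n i : ℕ) : List ℤ → ℕ
  | [] => 0
  | x :: w => if vPhiD n i x < wEpsD n i w then wEpsD n i w + vEpsD n i x - vPhiD n i x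
              else vEpsD n i x

/-- `f̃_i` on words of type `D` (the crystal `G_n^D` of `⊕_l (V_n^D)^{⊗l}`). -/
def wFD (n i : ℕ) : List ℤ → Option (List ℤ)
  | [] => none
  | x :: w => if wEpsD n i w < vPhiD n i x then (vFD n i x).map (· :: w)
              else (wFD n i w).map (x :: ·)

/-- Two words lie in the same connected component of the crystal of words of
type `D`. -/
def ConnD (n : ℕ) : List ℤ → List ℤ → Prop :=
  Relation.EqvGen (fun a b => ∃ i : ℕ, 1 ≤ i ∧ i ≤ n ∧ wFD n i a = some b)


/-! By the tensor product rule, `f̃_i` acting on a word `u v` changes a letter of `u` or a letter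
of `v`, never both, and keeps the length. Hence along any path of the crystal graph starting at
`u₁ v₁`, the prefix of length `l(u₁)` and the complementary suffix each move along a path of the
crystal graph, and the claim follows for both types at once. -/

section TensorRule

variable {α : Type*} (eps phi : α → ℕ) (f : α → Option α)

-- `ε(x ⊗ w) = ε(x) + max(0, ε(w) - φ(x))`, the `max` being truncated subtraction in `ℕ`.
def tensorEps : List α → ℕ
  | [] => 0
  | x :: w => eps x + (tensorEps w - phi x)

def tensorF : List α → Option (List α)
  | [] => none
  | x :: w => if tensorEps eps phi w < phi x then (f x).map (· :: w) else (tensorF w).map (x :: ·)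

theorem tensorEps_le_append (u v : List α) : tensorEps eps phi u ≤ tensorEps eps phi (u ++ v) := by
  induction u with
  | nil => exact Nat.zero_le _
  | cons x u ih => simp only [List.cons_append, tensorEps]; omega

theorem length_eq_of_tensorF_eq_some {w w' : List α} (h : tensorF eps phi f w = some w') :
    w'.length = w.length := by
  induction w generalizing w' with
  | nil => simp [tensorF] at h
  | cons x w ih =>
    rw [tensorF] at h
    split_ifs at h
    · obtain ⟨y, -, rfl⟩ := Option.map_eq_some_iff.mp h
      rfl
    · obtain ⟨w'', hw'', rfl⟩ := Option.map_eq_some_iff.mp h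
      simp [ih hw'']

/- The equality of `ε` in the first case is what lets the induction step decide, from `ε(u v)`
alone, that a letter in front of `u` does not absorb `f̃`. -/
theorem tensorF_append_eq_some {u v w : List α} (h : tensorF eps phi f (u ++ v) = some w) :
    (∃ u', tensorF eps phi f u = some u' ∧ w = u' ++ v ∧
      tensorEps eps phi (u ++ v) = tensorEps eps phi u) ∨
    ∃ v', tensorF eps phi f v = some v' ∧ w = u ++ v' := by
  induction u generalizing w with
  | nil => exact Or.inr ⟨w, h, rfl⟩
  | cons x u ih =>
    rw [List.cons_append, tensorF] at h
    split_ifs at h with hx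
    · obtain ⟨y, hy, rfl⟩ := Option.map_eq_some_iff.mp h
      have hu : tensorEps eps phi u < phi x := (tensorEps_le_append eps phi u v).trans_lt hx
      refine Or.inl ⟨y :: u, by simp [tensorF, hu, hy], rfl, ?_⟩
      simp only [List.cons_append, tensorEps]
      omega
    · obtain ⟨w', hw', rfl⟩ := Option.map_eq_some_iff.mp h
      rcases ih hw' with ⟨u', hu', rfl, heps⟩ | ⟨v', hv', rfl⟩
      · refine Or.inl ⟨x :: u', by simp [tensorF, ← heps, hx, hu'], rfl, ?_⟩
        simp only [List.cons_append, tensorEps, heps]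
      · exact Or.inr ⟨v', hv', rfl⟩

end TensorRule

section Splitting

variable {α : Type*} {r : List α → List α → Prop}

theorem eqvGen_take_and_drop (hlen : ∀ a b, r a b → b.length = a.length)
    (hsplit : ∀ u v w, r (u ++ v) w →
      (∃ u', r u u' ∧ w = u' ++ v) ∨ ∃ v', r v v' ∧ w = u ++ v')
    (k : ℕ) {a b : List α} (h : Relation.EqvGen r a b) :
    Relation.EqvGen r (a.take k) (b.take k) ∧ Relation.EqvGen r (a.drop k) (b.drop k) := by
  induction h with
  | rel a b hab =>
    by_cases hk : a.length ≤ k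
    · have hb : b.length ≤ k := hlen a b hab ▸ hk
      simp only [List.take_of_length_le hk, List.take_of_length_le hb,
        List.drop_eq_nil_of_le hk, List.drop_eq_nil_of_le hb]
      exact ⟨.rel a b hab, .refl []⟩
    · have hk' : (a.take k).length = k := List.length_take_of_le (by omega)
      rw [← List.take_append_drop k a] at hab ⊢
      rcases hsplit _ _ _ hab with ⟨u', hu', rfl⟩ | ⟨v', hv', rfl⟩
      · have hu'k : u'.length = k := (hlen _ _ hu').trans hk'
        simp only [List.take_left' hk', List.drop_left' hk', List.take_left' hu'k,
          List.drop_left' hu'k]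
        exact ⟨.rel _ _ hu', .refl _⟩
      · simp only [List.take_left' hk', List.drop_left' hk']
        exact ⟨.refl _, .rel _ _ hv'⟩
  | refl a => exact ⟨.refl _, .refl _⟩
  | symm a b _ ih => exact ⟨ih.1.symm, ih.2.symm⟩
  | trans a b c _ _ ih₁ ih₂ => exact ⟨ih₁.1.trans _ _ _ ih₂.1, ih₁.2.trans _ _ _ ih₂.2⟩

theorem eqvGen_of_eqvGen_append (hlen : ∀ a b, r a b → b.length = a.length)
    (hsplit : ∀ u v w, r (u ++ v) w →
      (∃ u', r u u' ∧ w = u' ++ v) ∨ ∃ v', r v v' ∧ w = u ++ v')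
    {u₁ v₁ u₂ v₂ : List α} (hu : u₁.length = u₂.length)
    (h : Relation.EqvGen r (u₁ ++ v₁) (u₂ ++ v₂)) :
    Relation.EqvGen r u₁ u₂ ∧ Relation.EqvGen r v₁ v₂ := by
  have := eqvGen_take_and_drop hlen hsplit u₁.length h
  rwa [List.take_left, List.drop_left, hu, List.take_left, List.drop_left] at this

end Splitting

theorem eqvGen_tensorF_of_append {α : Type*} (eps phi : ℕ → α → ℕ) (f : ℕ → α → Option α)
    (n : ℕ) {u₁ v₁ u₂ v₂ : List α} (hu : u₁.length = u₂.length)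
    (h : Relation.EqvGen (fun a b => ∃ i : ℕ, 1 ≤ i ∧ i ≤ n ∧
      tensorF (eps i) (phi i) (f i) a = some b) (u₁ ++ v₁) (u₂ ++ v₂)) :
    Relation.EqvGen (fun a b => ∃ i : ℕ, 1 ≤ i ∧ i ≤ n ∧
        tensorF (eps i) (phi i) (f i) a = some b) u₁ u₂ ∧
      Relation.EqvGen (fun a b => ∃ i : ℕ, 1 ≤ i ∧ i ≤ n ∧
        tensorF (eps i) (phi i) (f i) a = some b) v₁ v₂ := by
  refine eqvGen_of_eqvGen_append ?_ ?_ hu h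
  · rintro a b ⟨i, -, -, hab⟩
    exact length_eq_of_tensorF_eq_some _ _ _ hab
  · rintro u v w ⟨i, hi₁, hi₂, huv⟩
    rcases tensorF_append_eq_some _ _ _ huv with ⟨u', hu', rfl, -⟩ | ⟨v', hv', rfl⟩
    · exact Or.inl ⟨u', ⟨i, hi₁, hi₂, hu'⟩, rfl⟩
    · exact Or.inr ⟨v', ⟨i, hi₁, hi₂, hv'⟩, rfl⟩

theorem wEps_eq_tensorEps (n i : ℕ) (w : List ℤ) :
    wEps n i w = tensorEps (vEps n i) (vPhi n i) w := by
  induction w with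
  | nil => rfl
  | cons x w ih => simp only [wEps, tensorEps, ih]; split_ifs <;> omega

theorem wF_eq_tensorF (n i : ℕ) (w : List ℤ) :
    wF n i w = tensorF (vEps n i) (vPhi n i) (vF n i) w := by
  induction w with
  | nil => rfl
  | cons x w ih => simp only [wF, tensorF, wEps_eq_tensorEps, ih]

theorem wEpsD_eq_tensorEps (n i : ℕ) (w : List ℤ) :
    wEpsD n i w = tensorEps (vEpsD n i) (vPhiD n i) w := by
  induction w with
  | nil => rfl
  | cons x w ih => simp only [wEpsD, tensorEps, ih]; split_ifs <;> omega

theorem wFD_eq_tensorF (n i : ℕ) (w : List ℤ) :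
    wFD n i w = tensorF (vEpsD n i) (vPhiD n i) (vFD n i) w := by
  induction w with
  | nil => rfl
  | cons x w ih => simp only [wFD, tensorF, wEpsD_eq_tensorEps, ih]

theorem stmt18_general (n : ℕ) (u₁ v₁ u₂ v₂ : List ℤ)
    (hu : u₁.length = u₂.length) :
    (Conn n (u₁ ++ v₁) (u₂ ++ v₂) → Conn n u₁ u₂ ∧ Conn n v₁ v₂) ∧
    (ConnD n (u₁ ++ v₁) (u₂ ++ v₂) → ConnD n u₁ u₂ ∧ ConnD n v₁ v₂) := by
  simp only [Conn, ConnD, wF_eq_tensorF, wFD_eq_tensorF]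
  exact ⟨eqvGen_tensorF_of_append _ _ _ n hu, eqvGen_tensorF_of_append _ _ _ n hu⟩

/-- coplactic lemma.  If `w₁ = u₁v₁` and `w₂ = u₂v₂` with
`l(u₁) = l(u₂)` and `l(v₁) = l(v₂)` lie in the same connected component of the
crystal graph `G_n` (of type `B` or of type `D`), then `u₁, u₂` lie in the
same connected component, and so do `v₁, v₂`. -/
theorem stmt18 (n : ℕ) (u₁ v₁ u₂ v₂ : List ℤ)
    (hu : u₁.length = u₂.length) (hv : v₁.length = v₂.length) :
    (Conn n (u₁ ++ v₁) (u₂ ++ v₂) → Conn n u₁ u₂ ∧ Conn n v₁ v₂) ∧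
    (ConnD n (u₁ ++ v₁) (u₂ ++ v₂) → ConnD n u₁ u₂ ∧ ConnD n v₁ v₂) :=
  stmt18_general n u₁ v₁ u₂ v₂ hu
end
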